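/- There exist a constant c > 0 and an integer K_0 such that for all K ≥ K_0 the following holds. Let V be the disjoint union of sets A_1, ..., A_K each of size K (so n = K²), let c(S) = max_{1≤k≤K} |S ∩ A_k|, and let p_i = 1/K for all i ∈ V. Then the independent expected value satisfies I(c,V,{1/K}) = E[max_{1≤k≤K} ζ_k], where ζ_1,...,ζ_K are i.i.d. Binomial(K,1/K), and the correlation gap satisfies L(c,V,{1/K}) / I(c,V,{1/K}) ≥ c·√n·log log n / log n. Hence the correlation gap of monotone subadditive functions can be Ω(√n·log log n / log n). -/

import Mathlib

open Finset

variable {W : Type*} [Fintype W] [DecidableEq W]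

/-- Expected value of `f` under a distribution `α` on subsets of the ground set. -/
noncomputable def expVal (α : Finset W → ℝ) (f : Finset W → ℝ) : ℝ :=
  ∑ S : Finset W, α S * f S

/-- `α` is a probability distribution on subsets of the ground set with marginals `p`. -/
def IsDistWithMarginals (p : W → ℝ) (α : Finset W → ℝ) : Prop :=
  (∀ S, 0 ≤ α S) ∧ (∑ S : Finset W, α S = 1) ∧
    (∀ i : W, ∑ S ∈ Finset.univ.filter (fun S => i ∈ S), α S = p i)

/-- The worst-case expected value `L(f,V,{p_i})`: supremum of the expected value of `f`
over all distributions with marginals `p`. -/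
noncomputable def worstVal (p : W → ℝ) (f : Finset W → ℝ) : ℝ :=
  sSup {v | ∃ α, IsDistWithMarginals p α ∧ v = expVal α f}

/-- The expected value `I(f,V,{p_i})` of `f` when each element is included
independently with probability `p i`. -/
noncomputable def indepVal (p : W → ℝ) (f : Finset W → ℝ) : ℝ :=
  ∑ S : Finset W, (∏ i ∈ S, p i) * (∏ i ∈ Sᶜ, (1 - p i)) * f S

/-- `χ` is an `(η,β)`-cost-sharing scheme for `f`.  An ordering of a subset `S` of the ground
set is encoded as a duplicate-free list `l` with `l.toFinset = S`; the restriction of the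
ordering `l` to a subset `s` is `l.filter (· ∈ s)`.  The three conditions are:
`β`-budget balance, cross-monotonicity, and weak `η`-summability (the sum over `ℓ` of the
share of the `ℓ`-th element in the set of the first `ℓ` elements is at most `η·f(S)`). -/
def IsCostShare (f : Finset W → ℝ) (η β : ℝ) (χ : List W → W → ℝ) : Prop :=
  (∀ l : List W, l ≠ [] → l.Nodup →
      ∑ i ∈ l.toFinset, χ l i ≤ f l.toFinset ∧ f l.toFinset / β ≤ ∑ i ∈ l.toFinset, χ l i) ∧
  (∀ l : List W, l.Nodup → ∀ s : Finset W, s ⊆ l.toFinset → ∀ i ∈ s,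
      χ l i ≤ χ (l.filter (fun a => a ∈ s)) i) ∧
  (∀ l : List W, l ≠ [] → l.Nodup →
      ∑ ℓ : Fin l.length, χ (l.take (ℓ.1 + 1)) (l.get ℓ) ≤ η * f l.toFinset)

open MeasureTheory ProbabilityTheory

/-!
Picking one block `A_k` uniformly at random is a distribution with marginals `1/K` on which
`c = K`, so `L ≥ K`. Under independent sampling the rows of the `K × K` grid are independent
`Binomial(K, 1/K)` counts, so `I` is the expected maximum of `K` of them, namely
`∑_{j<K} (1 - F(j)^K)` with `F` the binomial CDF, and the same tail sum computes
`E[max_k ζ_k]`. Bernoulli's inequality and the Poisson-like tail `1 - F(j) ≤ 2/(j+1)!` give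
`I ≤ t + 4K/(t+1)!`, and `t ≈ 8 log K / log log K` already has `t! ≥ 4K`. Hence
`I = O(log K / log log K)` and `L / I = Ω(√n log log n / log n)`.
-/

open scoped Nat

theorem sum_Ico_inv_factorial_succ_le (a N : ℕ) :
    ∑ i ∈ Ico a N, (1 / (i + 1)! : ℝ) ≤ 2 / (a + 1)! := by
  have hterm : ∀ k : ℕ, (1 / (a + k + 1)! : ℝ) ≤ 1 / (a + 1)! * (1 / 2) ^ k := fun k => by
    have hfac : ((a + 1)! * 2 ^ k : ℝ) ≤ (a + k + 1)! := by
      have := Nat.factorial_mul_pow_le_factorial (m := a + 1) (n := k)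
      rw [show a + 1 + k = a + k + 1 by omega] at this
      calc ((a + 1)! * 2 ^ k : ℝ) ≤ (a + 1)! * (a + 1 + 1 : ℝ) ^ k := by gcongr; linarith
        _ ≤ (a + k + 1)! := by exact_mod_cast this
    rw [one_div_pow, one_div_mul_one_div]
    exact one_div_le_one_div_of_le (by positivity) hfac
  rw [sum_Ico_eq_sum_range]
  calc ∑ k ∈ range (N - a), (1 / (a + k + 1)! : ℝ)
      ≤ ∑ k ∈ range (N - a), 1 / (a + 1)! * (1 / 2 : ℝ) ^ k := Finset.sum_le_sum fun k _ => hterm k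
    _ = 1 / (a + 1)! * ∑ k ∈ range (N - a), (1 / 2 : ℝ) ^ k := (Finset.mul_sum ..).symm
    _ ≤ 1 / (a + 1)! * 2 := by gcongr; exact sum_geometric_two_le _
    _ = 2 / (a + 1)! := by ring

theorem natCast_eq_sum_range_one_sub_indicator {s N : ℕ} (h : s ≤ N) :
    (s : ℝ) = ∑ j ∈ range N, (1 - if s ≤ j then 1 else 0) := by
  have hlt : ∀ j, (1 - if s ≤ j then (1 : ℝ) else 0) = if j < s then 1 else 0 := fun j => by
    by_cases hj : s ≤ j
    · rw [if_pos hj, if_neg (by omega), sub_self]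
    · rw [if_neg hj, if_pos (by omega), sub_zero]
  have hrange : (range N).filter (· < s) = range s := by
    ext j; simp only [mem_filter, mem_range]; omega
  simp only [hlt, sum_boole, hrange, card_range]

theorem prod_ite_mem_eq_pow {α R : Type*} [Fintype α] [DecidableEq α] [CommMonoid R]
    (S : Finset α) (a b : R) :
    ∏ x, (if x ∈ S then a else b) = a ^ #S * b ^ (Fintype.card α - #S) := by
  rw [Finset.prod_ite, Finset.prod_const, Finset.prod_const, ← card_compl]
  congr 3 <;> ext x <;> simp

noncomputable def binomCDF (n : ℕ) (p : ℝ) (j : ℕ) : ℝ :=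
  ∑ i ∈ range (j + 1), (n.choose i : ℝ) * p ^ i * (1 - p) ^ (n - i)

/-- The expected maximum of `m` independent `Binomial(n, p)` variables, by the tail-sum formula
`E[X] = ∑_{j < n} P(X > j)` for `X ≤ n`. -/
noncomputable def expMaxBinomial (m n : ℕ) (p : ℝ) : ℝ :=
  ∑ j ∈ range n, (1 - binomCDF n p j ^ m)

section Binomial

variable {n : ℕ} {p : ℝ}

theorem binomCDF_of_le {j : ℕ} (hj : n ≤ j) : binomCDF n p j = 1 := by
  have htail : ∀ i ∈ range (j + 1), i ∉ range (n + 1) →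
      (n.choose i : ℝ) * p ^ i * (1 - p) ^ (n - i) = 0 := fun i _ hi => by
    rw [Nat.choose_eq_zero_of_lt (by simpa using hi)]; simp
  rw [binomCDF, ← Finset.sum_subset (range_subset_range.2 (by omega)) htail]
  have h := add_pow p (1 - p) n
  rw [add_sub_cancel, one_pow] at h
  exact (Finset.sum_congr rfl fun i _ => by ring).trans h.symm

theorem binomCDF_nonneg (hp₀ : 0 ≤ p) (hp₁ : p ≤ 1) (j : ℕ) : 0 ≤ binomCDF n p j :=
  Finset.sum_nonneg fun i _ => by have := sub_nonneg.2 hp₁; positivity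

theorem binomCDF_le_one (hp₀ : 0 ≤ p) (hp₁ : p ≤ 1) (j : ℕ) : binomCDF n p j ≤ 1 := by
  rw [← binomCDF_of_le (le_max_left n j)]
  exact Finset.sum_le_sum_of_subset_of_nonneg (range_subset_range.2 (by omega))
    fun i _ _ => by have := sub_nonneg.2 hp₁; positivity

theorem binom_pmf_le_inv_factorial (hp₀ : 0 ≤ p) (hp₁ : p ≤ 1) (hnp : n * p ≤ 1) (i : ℕ) :
    (n.choose i : ℝ) * p ^ i * (1 - p) ^ (n - i) ≤ 1 / i ! := by
  calc (n.choose i : ℝ) * p ^ i * (1 - p) ^ (n - i) ≤ n ^ i / i ! * p ^ i * 1 := by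
        gcongr
        · exact Nat.choose_le_pow_div i n
        · exact pow_le_one₀ (by linarith) (by linarith)
    _ = (n * p) ^ i / i ! := by ring
    _ ≤ 1 / i ! := by gcongr; exact pow_le_one₀ (by positivity) hnp

theorem one_sub_binomCDF_le (hp₀ : 0 ≤ p) (hp₁ : p ≤ 1) (hnp : n * p ≤ 1) (j : ℕ) :
    1 - binomCDF n p j ≤ 2 / (j + 1)! := by
  set b : ℕ → ℝ := fun i => (n.choose i : ℝ) * p ^ i * (1 - p) ^ (n - i)
  have htail : 1 - binomCDF n p j = ∑ i ∈ Ico j (n + j), b (i + 1) := by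
    rw [← binomCDF_of_le (show n ≤ n + j by omega), binomCDF, binomCDF,
      ← Finset.sum_Ico_eq_sub _ (by omega), Finset.sum_Ico_add']
  rw [htail]
  exact (Finset.sum_le_sum fun i _ => binom_pmf_le_inv_factorial hp₀ hp₁ hnp (i + 1)).trans
    (sum_Ico_inv_factorial_succ_le j (n + j))

theorem one_sub_binomCDF_pow_nonneg (hp₀ : 0 ≤ p) (hp₁ : p ≤ 1) (m j : ℕ) :
    0 ≤ 1 - binomCDF n p j ^ m :=
  sub_nonneg.2 (pow_le_one₀ (binomCDF_nonneg hp₀ hp₁ j) (binomCDF_le_one hp₀ hp₁ j))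

theorem expMaxBinomial_le (hp₀ : 0 ≤ p) (hp₁ : p ≤ 1) (hnp : n * p ≤ 1) (m t : ℕ) :
    expMaxBinomial m n p ≤ t + 4 * m / (t + 1)! := by
  set g : ℕ → ℝ := fun j => 1 - binomCDF n p j ^ m
  have hg₀ : ∀ j, 0 ≤ g j := one_sub_binomCDF_pow_nonneg hp₀ hp₁ m
  have hg₁ : ∀ j, g j ≤ 1 := fun j => by
    have := pow_nonneg (binomCDF_nonneg hp₀ hp₁ (n := n) j) m; simp only [g]; linarith
  -- Bernoulli's inequality: `1 - F ^ m ≤ m (1 - F)`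
  have hg₂ : ∀ j, g j ≤ 2 * m * (1 / (j + 1)!) := fun j => by
    have hF := binomCDF_nonneg hp₀ hp₁ (n := n) j
    have hbern := one_add_mul_le_pow (a := binomCDF n p j - 1) (by linarith) m
    have htail := one_sub_binomCDF_le hp₀ hp₁ hnp j
    rw [add_sub_cancel] at hbern
    calc g j ≤ m * (1 - binomCDF n p j) := by simp only [g]; linarith
      _ ≤ m * (2 / (j + 1)!) := by gcongr
      _ = 2 * m * (1 / (j + 1)!) := by ring
  calc expMaxBinomial m n p = ∑ j ∈ range n, g j := rfl
    _ ≤ ∑ j ∈ range (t + n), g j :=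
        Finset.sum_le_sum_of_subset_of_nonneg (range_subset_range.2 (by omega)) fun j _ _ => hg₀ j
    _ = ∑ j ∈ range t, g j + ∑ j ∈ Ico t (t + n), g j :=
        (Finset.sum_range_add_sum_Ico _ (by omega)).symm
    _ ≤ ∑ j ∈ range t, 1 + ∑ j ∈ Ico t (t + n), 2 * m * (1 / (j + 1)! : ℝ) := by
        gcongr with j _ j _
        exacts [hg₁ j, hg₂ j]
    _ ≤ t + 2 * m * (2 / (t + 1)!) := by
        rw [← Finset.mul_sum]
        simp only [Finset.sum_const, card_range, nsmul_eq_mul, mul_one]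
        gcongr
        exact sum_Ico_inv_factorial_succ_le t (t + n)
    _ = t + 4 * m / (t + 1)! := by ring

theorem expMaxBinomial_pos (hp₀ : 0 < p) (hp₁ : p ≤ 1) {m : ℕ} (hm : m ≠ 0) (hn : n ≠ 0) :
    0 < expMaxBinomial m n p := by
  have hF₀ : binomCDF n p 0 = (1 - p) ^ n := by simp [binomCDF]
  have hF₀_lt : binomCDF n p 0 < 1 := by
    rw [hF₀]; exact pow_lt_one₀ (by linarith) (by linarith) hn
  refine Finset.sum_pos' (fun j _ => one_sub_binomCDF_pow_nonneg hp₀.le hp₁ m j)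
    ⟨0, mem_range.2 (Nat.pos_of_ne_zero hn), ?_⟩
  exact sub_pos.2 (pow_lt_one₀ (binomCDF_nonneg hp₀.le hp₁ 0) hF₀_lt hm)

end Binomial

section WorstCase

theorem expVal_le_worstVal {p : W → ℝ} {f : Finset W → ℝ} {α : Finset W → ℝ} {B : ℝ}
    (hα : IsDistWithMarginals p α) (hB : ∀ S, f S ≤ B) : expVal α f ≤ worstVal p f := by
  refine le_csSup ⟨B, ?_⟩ ⟨α, hα, rfl⟩
  rintro _ ⟨β, ⟨hβ₀, hβ₁, -⟩, rfl⟩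
  calc expVal β f ≤ ∑ S, β S * B :=
        Finset.sum_le_sum fun S _ => mul_le_mul_of_nonneg_left (hB S) (hβ₀ S)
    _ = B := by rw [← Finset.sum_mul, hβ₁, one_mul]

variable {ι : Type*} [Fintype ι]

noncomputable def uniformFamily (A : ι → Finset W) (S : Finset W) : ℝ :=
  (∑ k, if A k = S then 1 else 0) / Fintype.card ι

theorem expVal_uniformFamily (A : ι → Finset W) (f : Finset W → ℝ) :
    expVal (uniformFamily A) f = (∑ k, f (A k)) / Fintype.card ι := by
  simp only [expVal, uniformFamily, div_mul_eq_mul_div, ← Finset.sum_div, Finset.sum_mul, ite_mul,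
    one_mul, zero_mul]
  rw [Finset.sum_comm]
  simp

theorem isDistWithMarginals_uniformFamily [Nonempty ι] {A : ι → Finset W}
    (hA : ∀ i, ∃! k, i ∈ A k) :
    IsDistWithMarginals (fun _ => 1 / Fintype.card ι) (uniformFamily A) := by
  have hcard : (Fintype.card ι : ℝ) ≠ 0 := by exact_mod_cast Fintype.card_ne_zero
  refine ⟨fun S => by unfold uniformFamily; positivity, ?_, fun i => ?_⟩
  · simp only [uniformFamily, ← Finset.sum_div]
    rw [Finset.sum_comm]
    simp [hcard]
  · classical
    obtain ⟨k₀, hik₀, hk₀⟩ := hA i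
    have hmem : ∀ k, A k ∈ univ.filter (fun S => i ∈ S) ↔ k = k₀ := fun k => by
      simpa using ⟨hk₀ k, fun h => h ▸ hik₀⟩
    simp only [uniformFamily, ← Finset.sum_div]
    rw [Finset.sum_comm]
    simp only [Finset.sum_ite_eq]
    rw [Finset.sum_congr rfl fun k _ => if_congr (hmem k) rfl rfl, Finset.sum_ite_eq']
    simp

end WorstCase

section Grid

variable {ι κ : Type*} [Fintype ι] [DecidableEq ι] [Fintype κ] [DecidableEq κ]

def rowsEquiv : Finset (ι × κ) ≃ (ι → Finset κ) where
  toFun S k := univ.filter fun j => (k, j) ∈ S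
  invFun f := univ.filter fun x => x.2 ∈ f x.1
  left_inv S := by ext x; simp
  right_inv f := by funext k; ext j; simp

@[simp]
theorem mem_rowsEquiv_apply {S : Finset (ι × κ)} {k : ι} {j : κ} :
    j ∈ rowsEquiv S k ↔ (k, j) ∈ S := by
  simp [rowsEquiv]

theorem card_rowsEquiv_apply (S : Finset (ι × κ)) (k : ι) :
    #(rowsEquiv S k) = #(S.filter fun x => x.1 = k) := by
  rw [← card_map (Function.Embedding.sectR k κ)]
  congr 1
  ext ⟨k', j⟩
  simp only [mem_map, mem_rowsEquiv_apply, Function.Embedding.sectR_apply, Prod.mk.injEq,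
    mem_filter]
  aesop

def rowMax (S : Finset (ι × κ)) : ℕ := univ.sup fun k => #(rowsEquiv S k)

theorem rowMax_le (S : Finset (ι × κ)) : rowMax S ≤ Fintype.card κ :=
  Finset.sup_le fun _ _ => card_le_univ _

theorem rowMax_filter_fst_eq (k : ι) :
    rowMax (univ.filter fun x : ι × κ => x.1 = k) = Fintype.card κ :=
  le_antisymm (rowMax_le _) (Finset.le_sup_of_le (mem_univ k) (by simp [rowsEquiv]))

theorem card_le_worstVal_rowMax [Nonempty ι] :
    (Fintype.card κ : ℝ)
      ≤ worstVal (fun _ => 1 / Fintype.card ι) (fun S : Finset (ι × κ) => (rowMax S : ℝ)) := by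
  have hblocks : ∀ x : ι × κ, ∃! k, x ∈ univ.filter fun y : ι × κ => y.1 = k :=
    fun x => ⟨x.1, by simp, fun k hk => by simp_all⟩
  have := expVal_le_worstVal (isDistWithMarginals_uniformFamily hblocks)
    fun S => Nat.cast_le.2 (rowMax_le (ι := ι) (κ := κ) S)
  rw [expVal_uniformFamily] at this
  convert this using 1
  simp [rowMax_filter_fst_eq, card_univ]

theorem sum_prod_ite_mem_mul_prod_rows (p : ℝ) (g : ℕ → ℝ) :
    ∑ S : Finset (ι × κ), (∏ x, if x ∈ S then p else 1 - p) * ∏ k, g #(rowsEquiv S k)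
      = (∑ i ∈ range (Fintype.card κ + 1),
          (Fintype.card κ).choose i * p ^ i * (1 - p) ^ (Fintype.card κ - i) * g i)
          ^ Fintype.card ι := by
  set w : Finset κ → ℝ := fun t => ∏ j, if j ∈ t then p else 1 - p
  have hrows : ∀ S : Finset (ι × κ), (∏ x, if x ∈ S then p else 1 - p) = ∏ k, w (rowsEquiv S k) :=
    fun S => by simp only [w, Fintype.prod_prod_type, mem_rowsEquiv_apply]
  calc ∑ S : Finset (ι × κ), (∏ x, if x ∈ S then p else 1 - p) * ∏ k, g #(rowsEquiv S k)
      = ∑ S : Finset (ι × κ), ∏ k, w (rowsEquiv S k) * g #(rowsEquiv S k) := by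
        simp only [hrows, Finset.prod_mul_distrib]
    _ = ∑ f : ι → Finset κ, ∏ k, w (f k) * g #(f k) :=
        rowsEquiv.sum_comp fun f => ∏ k, w (f k) * g #(f k)
    _ = (∑ t : Finset κ, w t * g #t) ^ Fintype.card ι := by
        rw [← Fintype.prod_sum fun (_ : ι) t => w t * g #t, Finset.prod_const, card_univ]
    _ = _ := by
        simp only [w, prod_ite_mem_eq_pow]
        rw [← powerset_univ,
          sum_powerset_apply_card fun i => p ^ i * (1 - p) ^ (Fintype.card κ - i) * g i, card_univ]
        simp only [nsmul_eq_mul, mul_assoc]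

theorem sum_prod_ite_mem_mul_indicator_rowMax_le (p : ℝ) {j : ℕ} (hj : j ≤ Fintype.card κ) :
    ∑ S : Finset (ι × κ), (∏ x, if x ∈ S then p else 1 - p) * (if rowMax S ≤ j then 1 else 0)
      = binomCDF (Fintype.card κ) p j ^ Fintype.card ι := by
  have hind : ∀ S : Finset (ι × κ),
      (if rowMax S ≤ j then (1 : ℝ) else 0) = ∏ k, if #(rowsEquiv S k) ≤ j then 1 else 0 :=
    fun S => by simp [Finset.prod_boole, rowMax, Finset.sup_le_iff]
  have hrange : (range (Fintype.card κ + 1)).filter (· ≤ j) = range (j + 1) := by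
    ext i; simp only [mem_filter, mem_range]; omega
  simp only [hind]
  rw [sum_prod_ite_mem_mul_prod_rows p fun i => if i ≤ j then 1 else 0, binomCDF, ← hrange,
    sum_filter]
  simp only [mul_ite, mul_one, mul_zero]

theorem indepVal_rowMax (p : ℝ) :
    indepVal (fun _ => p) (fun S : Finset (ι × κ) => (rowMax S : ℝ))
      = expMaxBinomial (Fintype.card ι) (Fintype.card κ) p := by
  set n := Fintype.card κ
  set w : Finset (ι × κ) → ℝ := fun S => ∏ x, if x ∈ S then p else 1 - p
  have hw : ∀ S, (∏ _ ∈ S, p) * ∏ _ ∈ Sᶜ, (1 - p) = w S := fun S => by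
    simp only [w, prod_ite_mem_eq_pow, Finset.prod_const, card_compl]
  have hmax : ∀ S : Finset (ι × κ), (if rowMax S ≤ n then (1 : ℝ) else 0) = 1 :=
    fun S => if_pos (rowMax_le S)
  calc indepVal (fun _ => p) (fun S : Finset (ι × κ) => (rowMax S : ℝ))
      = ∑ S, w S * ∑ j ∈ range n, (1 - if rowMax S ≤ j then 1 else 0) := by
        simp only [indepVal, hw]
        exact Finset.sum_congr rfl fun S _ => by
          rw [← natCast_eq_sum_range_one_sub_indicator (rowMax_le S)]
    _ = ∑ j ∈ range n, (∑ S, w S * (if rowMax S ≤ n then 1 else 0)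
          - ∑ S, w S * if rowMax S ≤ j then 1 else 0) := by
        simp only [hmax, Finset.mul_sum, mul_sub, mul_one, ← sum_sub_distrib]
        exact Finset.sum_comm
    _ = ∑ j ∈ range n, (binomCDF n p n ^ Fintype.card ι - binomCDF n p j ^ Fintype.card ι) :=
        Finset.sum_congr rfl fun j hj => by
          rw [sum_prod_ite_mem_mul_indicator_rowMax_le p le_rfl,
            sum_prod_ite_mem_mul_indicator_rowMax_le p (mem_range.1 hj).le]
    _ = expMaxBinomial (Fintype.card ι) n p := by
        rw [binomCDF_of_le le_rfl, one_pow]; rfl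

end Grid

section Probability

variable {Ω ι : Type*}

theorem setOf_sup_le_eq_biInter [Fintype ι] (ζ : ι → Ω → ℕ) (j : ℕ) :
    {ω | univ.sup (ζ · ω) ≤ j} = ⋂ k ∈ (univ : Finset ι), ζ k ⁻¹' Set.Iic j := by
  ext; simp [Finset.sup_le_iff]

variable [MeasurableSpace Ω] {μ : Measure Ω} {n : ℕ} {p : ℝ}

theorem measureReal_le_eq_binomCDF [IsFiniteMeasure μ] {ζ : Ω → ℕ} (hζ : Measurable ζ)
    (hlaw : ∀ i, μ.real {ω | ζ ω = i} = n.choose i * p ^ i * (1 - p) ^ (n - i)) (j : ℕ) :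
    μ.real {ω | ζ ω ≤ j} = binomCDF n p j := by
  have hset : {ω | ζ ω ≤ j} = ζ ⁻¹' ↑(range (j + 1)) := by ext; simp
  rw [hset, measureReal_def,
    ← sum_measure_preimage_singleton _ fun i _ => hζ (measurableSet_singleton i),
    ENNReal.toReal_sum fun _ _ => measure_ne_top _ _]
  exact Finset.sum_congr rfl fun i _ => hlaw i

theorem ae_le_of_binomial [IsProbabilityMeasure μ] {ζ : Ω → ℕ} (hζ : Measurable ζ)
    (hlaw : ∀ i, μ.real {ω | ζ ω = i} = n.choose i * p ^ i * (1 - p) ^ (n - i)) :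
    ∀ᵐ ω ∂μ, ζ ω ≤ n := by
  have hcdf := measureReal_le_eq_binomCDF hζ hlaw n
  rw [binomCDF_of_le le_rfl, measureReal_def, ENNReal.toReal_eq_one_iff] at hcdf
  exact (ae_iff_measure_eq (p := fun ω => ζ ω ≤ n) (hζ measurableSet_Iic).nullMeasurableSet).2
    (hcdf.trans measure_univ.symm)

variable [Fintype ι] {ζ : ι → Ω → ℕ}

theorem measureReal_sup_le_eq_binomCDF_pow [IsProbabilityMeasure μ] (hζ : ∀ k, Measurable (ζ k))
    (hind : iIndepFun ζ μ)
    (hlaw : ∀ k i, μ.real {ω | ζ k ω = i} = n.choose i * p ^ i * (1 - p) ^ (n - i)) (j : ℕ) :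
    μ.real {ω | univ.sup (ζ · ω) ≤ j} = binomCDF n p j ^ Fintype.card ι := by
  rw [setOf_sup_le_eq_biInter, measureReal_def,
    hind.measure_inter_preimage_eq_mul univ fun _ _ => measurableSet_Iic, ENNReal.toReal_prod]
  exact (Finset.prod_congr rfl fun k _ => measureReal_le_eq_binomCDF (hζ k) (hlaw k) j).trans
    (by rw [Finset.prod_const, card_univ])

theorem integral_sup_eq_expMaxBinomial [IsProbabilityMeasure μ] (hζ : ∀ k, Measurable (ζ k))
    (hind : iIndepFun ζ μ)
    (hlaw : ∀ k i, μ.real {ω | ζ k ω = i} = n.choose i * p ^ i * (1 - p) ^ (n - i)) :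
    ∫ ω, ((univ.sup (ζ · ω) : ℕ) : ℝ) ∂μ = expMaxBinomial (Fintype.card ι) n p := by
  set E : ℕ → Set Ω := fun j => {ω | univ.sup (ζ · ω) ≤ j}
  have hE : ∀ j, MeasurableSet (E j) := fun j => by
    simp only [E, setOf_sup_le_eq_biInter]
    exact Finset.measurableSet_biInter _ fun k _ => hζ k measurableSet_Iic
  have hind₁ : ∀ j, Integrable ((E j).indicator (1 : Ω → ℝ)) μ := fun j =>
    (integrable_const (1 : ℝ)).indicator (hE j)
  have hbound : ∀ᵐ ω ∂μ, univ.sup (ζ · ω) ≤ n := by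
    filter_upwards [ae_all_iff.2 fun k => ae_le_of_binomial (hζ k) (hlaw k)] with ω hω
    exact Finset.sup_le fun k _ => hω k
  have hae : (fun ω => ((univ.sup (ζ · ω) : ℕ) : ℝ)) =ᵐ[μ]
      fun ω => ∑ j ∈ range n, (1 - (E j).indicator 1 ω) := by
    filter_upwards [hbound] with ω hω
    simp [natCast_eq_sum_range_one_sub_indicator hω, E, Set.indicator_apply]
  rw [integral_congr_ae hae, integral_finsetSum (f := fun j ω => 1 - (E j).indicator 1 ω) _
    fun j _ => (integrable_const 1).sub (hind₁ j)]
  refine Finset.sum_congr rfl fun j _ => ?_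
  rw [integral_sub (integrable_const 1) (hind₁ j),
    integral_indicator_one (hE j), measureReal_sup_le_eq_binomCDF_pow hζ hind hlaw]
  simp

end Probability

section Estimates

open Real

theorem log_le_two_mul_sqrt {y : ℝ} (hy : 0 < y) : log y ≤ 2 * √y := by
  have h := log_le_sub_one_of_pos (sqrt_pos.2 hy)
  rw [log_sqrt hy.le] at h
  linarith

theorem exp_mul_log_sub_one_le_factorial (n : ℕ) : exp (n * (log n - 1)) ≤ n ! := by
  rcases Nat.eq_zero_or_pos n with rfl | hn
  · simp
  have hn' : (0 : ℝ) < n := by exact_mod_cast hn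
  have hpow : exp (n * (log n - 1)) = (n : ℝ) ^ n / exp n := by
    rw [mul_sub, mul_one, exp_sub, exp_nat_mul, exp_log hn']
  rw [hpow, div_le_iff₀ (exp_pos _), mul_comm]
  exact (div_le_iff₀ (by positivity)).1 (pow_div_factorial_le_exp _ hn'.le n)

theorem exists_exp_le_factorial_of_three_le {y : ℝ} (hy : 3 ≤ y) :
    ∃ t : ℕ, exp (4 * y) ≤ t ! ∧ (t + 1) * log (2 * y) ≤ 20 * y := by
  have hy₀ : 0 < y := by linarith
  have hL : 1 ≤ log y := (le_log_iff_exp_le hy₀).2 (by linarith [exp_one_lt_d9])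
  set t := ⌈8 * y / log y⌉₊
  have ht : 8 * y / log y ≤ t := Nat.le_ceil _
  refine ⟨t, ?_, ?_⟩
  · have hsqrt : 4 * √y ≤ 8 * y / log y := by
      rw [le_div_iff₀ (by linarith)]
      nlinarith [log_le_two_mul_sqrt hy₀, mul_self_sqrt hy₀.le, sqrt_nonneg y]
    have hlog_t : 1 + log y / 2 ≤ log t := by
      have hlog4 : 1 ≤ log 4 := (le_log_iff_exp_le (by norm_num)).2 (by linarith [exp_one_lt_d9])
      calc 1 + log y / 2 ≤ log 4 + log √y := by rw [log_sqrt hy₀.le]; linarith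
        _ = log (4 * √y) := (log_mul (by norm_num) (sqrt_pos.2 hy₀).ne').symm
        _ ≤ log t := log_le_log (by positivity) (hsqrt.trans ht)
    calc exp (4 * y) = exp (8 * y / log y * (log y / 2)) := by
          congr 1; field_simp; ring
      _ ≤ exp (t * (log t - 1)) := by
          gcongr
          linarith
      _ ≤ t ! := exp_mul_log_sub_one_le_factorial t
  · have ht' : (t : ℝ) < 8 * y / log y + 1 := Nat.ceil_lt_add_one (by positivity)
    have hlog2y : log (2 * y) ≤ 2 * log y := by
      rw [log_mul (by norm_num) hy₀.ne']
      linarith [log_le_sub_one_of_pos (show (0 : ℝ) < 2 by norm_num)]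
    calc (t + 1) * log (2 * y) ≤ (8 * y / log y + 2) * (2 * log y) :=
          mul_le_mul (by linarith) hlog2y (log_nonneg (by linarith)) (by positivity)
      _ = 16 * y + 4 * log y := by field_simp; ring
      _ ≤ 20 * y := by linarith [log_le_sub_one_of_pos hy₀]

theorem expMaxBinomial_mul_log_le {K : ℕ} (hK : exp 3 ≤ K) :
    expMaxBinomial K K (1 / K) * log (2 * log K) ≤ 20 * log K := by
  have hK₀ : (0 : ℝ) < K := (exp_pos 3).trans_le hK
  have hy : 3 ≤ log K := (le_log_iff_exp_le hK₀).2 hK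
  obtain ⟨t, hfac, hlog⟩ := exists_exp_le_factorial_of_three_le hy
  have h4K : 4 * (K : ℝ) ≤ (t + 1)! :=
    calc 4 * (K : ℝ) = 4 * exp (log K) := by rw [exp_log hK₀]
      _ ≤ exp (3 * log K) * exp (log K) := by gcongr; linarith [add_one_le_exp (3 * log K)]
      _ = exp (4 * log K) := by rw [← exp_add]; ring_nf
      _ ≤ (t + 1)! := hfac.trans (by exact_mod_cast Nat.factorial_le (Nat.le_succ t))
  have hI : expMaxBinomial K K (1 / K) ≤ t + 1 := by
    have := expMaxBinomial_le (n := K) (p := 1 / K) (by positivity)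
      ((div_le_one hK₀).2 (Nat.one_le_cast.2 (Nat.cast_pos.1 hK₀)))
      (by rw [mul_one_div_cancel hK₀.ne']) K t
    linarith [(div_le_one (by positivity)).2 h4K]
  exact (mul_le_mul_of_nonneg_right hI (log_nonneg (by linarith))).trans hlog

end Estimates

/-- Example 2 (correlation gap): there are `c₀ > 0` and `K₀` such that for all
`K ≥ K₀`, for the instance on `V = A_1 ⊔ ⋯ ⊔ A_K` (each `|A_k| = K`, `n = K²`) with
`c(S) = max_k |S ∩ A_k|` and marginals `1/K`: the independent expected value equals
`E[max_k ζ_k]` for i.i.d. Binomial(K,1/K) variables `ζ_k`, and the correlation gap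
satisfies `L/I ≥ c₀·√n·log log n / log n`. -/
theorem subadditive_correlation_gap_lower_bound :
    ∃ c₀ : ℝ, 0 < c₀ ∧ ∃ K₀ : ℕ, ∀ K : ℕ, K₀ ≤ K →
      ∀ (A : Fin K → Finset (Fin K × Fin K)),
        (∀ k : Fin K, A k = Finset.univ.filter (fun x : Fin K × Fin K => x.1 = k)) →
      ∀ (c : Finset (Fin K × Fin K) → ℝ),
        (∀ S, c S = ((Finset.univ.sup (fun k : Fin K => (S ∩ A k).card) : ℕ) : ℝ)) →
      -- the independent expected value is E[max of K i.i.d. Binomial(K,1/K) variables]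
      (∀ (Ω : Type) (_ : MeasureSpace Ω), IsProbabilityMeasure (ℙ : Measure Ω) →
        ∀ ζ : Fin K → Ω → ℕ, (∀ k, Measurable (ζ k)) →
        iIndepFun ζ ℙ →
        (∀ k : Fin K, ∀ j : ℕ,
          (ℙ {ω | ζ k ω = j}).toReal
            = (K.choose j : ℝ) * (1 / (K : ℝ)) ^ j * (1 - 1 / (K : ℝ)) ^ (K - j)) →
        indepVal (fun _ : Fin K × Fin K => 1 / (K : ℝ)) c
          = ∫ ω, ((Finset.univ.sup (fun k : Fin K => ζ k ω) : ℕ) : ℝ) ∂ℙ)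
      -- the correlation gap is at least c₀·√n·log log n / log n, where n = K²
      ∧ c₀ * Real.sqrt ((K : ℝ) ^ 2)
            * Real.log (Real.log ((K : ℝ) ^ 2)) / Real.log ((K : ℝ) ^ 2)
          ≤ worstVal (fun _ : Fin K × Fin K => 1 / (K : ℝ)) c
              / indepVal (fun _ : Fin K × Fin K => 1 / (K : ℝ)) c := by
  refine ⟨1 / 10, by norm_num, ⌈Real.exp 3⌉₊, fun K hK A hA c hc => ?_⟩
  have hK₀ : (0 : ℝ) < K := (Real.exp_pos 3).trans_le (Nat.ceil_le.1 hK)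
  have hy : 3 ≤ Real.log K := (Real.le_log_iff_exp_le hK₀).2 (Nat.ceil_le.1 hK)
  have : Nonempty (Fin K) := ⟨⟨0, by exact_mod_cast hK₀⟩⟩
  obtain rfl : c = fun S : Finset (Fin K × Fin K) => (rowMax S : ℝ) := funext fun S => by
    simp only [hc, hA, inter_filter, inter_univ, rowMax, card_rowsEquiv_apply]
  have hI : indepVal (fun _ => 1 / (K : ℝ)) (fun S : Finset (Fin K × Fin K) => (rowMax S : ℝ))
      = expMaxBinomial K K (1 / K) := by
    rw [indepVal_rowMax, Fintype.card_fin]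
  refine ⟨fun Ω _ _ ζ hζ hind hlaw => ?_, ?_⟩
  · rw [hI, integral_sup_eq_expMaxBinomial hζ hind hlaw, Fintype.card_fin]
  have hL := card_le_worstVal_rowMax (ι := Fin K) (κ := Fin K)
  have hK₁ : 0 < K := Nat.cast_pos.1 hK₀
  have hIpos := expMaxBinomial_pos (n := K) (one_div_pos.2 hK₀)
    ((div_le_one hK₀).2 (Nat.one_le_cast.2 hK₁)) hK₁.ne' hK₁.ne'
  simp only [Fintype.card_fin] at hL
  rw [hI, Real.sqrt_sq hK₀.le, Real.log_pow, Nat.cast_ofNat, le_div_iff₀ hIpos]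
  calc 1 / 10 * K * Real.log (2 * Real.log K) / (2 * Real.log K) * expMaxBinomial K K (1 / K)
      = K * (expMaxBinomial K K (1 / K) * Real.log (2 * Real.log K)) / (20 * Real.log K) := by
        field_simp; ring
    _ ≤ K := by
        rw [div_le_iff₀ (by positivity)]
        exact mul_le_mul_of_nonneg_left (expMaxBinomial_mul_log_le (Nat.ceil_le.1 hK)) hK₀.le
    _ ≤ _ := hL
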